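/- Let m ≥ 2 and n ≥ 2 be integers with gcd(m, n) = 1, and a an integer with gcd(a, mn) = 1. Then C_{mn}(a) ≡ (λ(n)/gcd(λ(m), λ(n))) · n⁻¹ · C_m(a) (mod m), where n⁻¹ denotes a multiplicative inverse of n modulo m. -/

import Mathlib

/-- The Carmichael function `λ(m)`: the smallest positive integer `n` such that
`a ^ n ≡ 1 (mod m)` for every integer `a` coprime to `m`. -/
noncomputable def carmichael (m : ℕ) : ℕ :=
  sInf {n : ℕ | 0 < n ∧ ∀ a : ℤ, Int.gcd a m = 1 → a ^ n ≡ 1 [ZMOD (m : ℤ)]}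

/-- The Carmichael quotient `C_m(a) = (a^{λ(m)} - 1) / m`. -/
noncomputable def carQuot (m : ℕ) (a : ℤ) : ℤ := (a ^ carmichael m - 1) / m

/-!
Write `λ = λ(m)`, `k = λ(n) / gcd(λ(m), λ(n))` and `a^λ = 1 + m C_m(a)`. Since `λ` is the exponent
of `(ℤ/m)ˣ`, the Chinese remainder theorem gives `λ(mn) = lcm(λ(m), λ(n)) = λ k`, so
`mn C_{mn}(a) = (1 + m C_m(a))^k - 1 ≡ k m C_m(a) (mod m²)` by the binomial theorem. Cancelling `m`
gives `n C_{mn}(a) ≡ k C_m(a) (mod m)`, and multiplying by the inverse of `n` finishes.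
-/

theorem forall_pow_modEq_one_iff_exponent_dvd (m k : ℕ) :
    (∀ a : ℤ, Int.gcd a m = 1 → a ^ k ≡ 1 [ZMOD m]) ↔ Monoid.exponent (ZMod m)ˣ ∣ k := by
  rw [Monoid.exponent_dvd_iff_forall_pow_eq_one]
  constructor
  · intro h u
    set a : ℤ := (u : ZMod m).cast
    have ha : (a : ZMod m) = u := ZMod.intCast_zmod_cast _
    have hcop : Int.gcd a m = 1 := by
      rw [Int.gcd_comm, ← Int.isCoprime_iff_gcd_eq_one, ← ZMod.coe_int_isUnit_iff_isCoprime, ha]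
      exact u.isUnit
    have hpow := (ZMod.intCast_eq_intCast_iff _ _ _).mpr (h a hcop)
    push_cast [ha] at hpow
    exact Units.ext (by simpa using hpow)
  · intro h a ha
    have hu := congrArg Units.val (h (ZMod.unitOfIsCoprime a (Int.isCoprime_iff_gcd_eq_one.mpr ha)))
    rw [Units.val_pow_eq_pow_val, ZMod.coe_unitOfIsCoprime, Units.val_one] at hu
    exact (ZMod.intCast_eq_intCast_iff _ _ _).mp (by push_cast; exact hu)

theorem carmichael_eq_exponent (m : ℕ) : carmichael m = Monoid.exponent (ZMod m)ˣ := by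
  have hpos := (Monoid.ExponentExists.of_finite (G := (ZMod m)ˣ)).exponent_pos
  simp_rw [carmichael, forall_pow_modEq_one_iff_exponent_dvd]
  exact le_antisymm (Nat.sInf_le ⟨hpos, dvd_rfl⟩)
    (le_csInf ⟨_, hpos, dvd_rfl⟩ fun k ⟨hk, hdvd⟩ => Nat.le_of_dvd hk hdvd)

theorem pow_carmichael_modEq_one (m : ℕ) {a : ℤ} (ha : Int.gcd a m = 1) :
    a ^ carmichael m ≡ 1 [ZMOD m] :=
  (forall_pow_modEq_one_iff_exponent_dvd m _).mpr (dvd_of_eq (carmichael_eq_exponent m).symm) a ha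

theorem carmichael_mul_of_coprime {m n : ℕ} (hmn : Nat.Coprime m n) :
    carmichael (m * n) = Nat.lcm (carmichael m) (carmichael n) := by
  have e : (ZMod (m * n))ˣ ≃* (ZMod m)ˣ × (ZMod n)ˣ :=
    (Units.mapEquiv (ZMod.chineseRemainder hmn).toMulEquiv).trans MulEquiv.prodUnits
  rw [carmichael_eq_exponent, carmichael_eq_exponent, carmichael_eq_exponent,
    Monoid.exponent_eq_of_mulEquiv e, Monoid.exponent_prod, lcm_eq_nat_lcm]

theorem mul_carQuot (m : ℕ) {a : ℤ} (ha : Int.gcd a m = 1) :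
    m * carQuot m a = a ^ carmichael m - 1 :=
  Int.mul_ediv_cancel' (pow_carmichael_modEq_one m ha).symm.dvd

theorem Int.modEq_mul_of_pow_sub_one_eq_mul {m x c q : ℤ} (hm : m ≠ 0) (k : ℕ)
    (hc : x - 1 = m * c) (hq : x ^ k - 1 = m * q) : q ≡ k * c [ZMOD m] := by
  obtain rfl : x = 1 + m * c := by linear_combination hc
  obtain ⟨t, ht⟩ := sq_dvd_add_pow_sub_sub (m * c) 1 k
  simp only [one_pow, one_mul] at ht
  refine Int.modEq_iff_dvd.mpr ((mul_dvd_mul_iff_left hm).mp ⟨-(c ^ 2 * t), ?_⟩)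
  linear_combination hq - ht

theorem stmt6_general (m n : ℕ) (hm : 2 ≤ m) (hmn : Nat.gcd m n = 1)
    (a : ℤ) (ha : Int.gcd a (m * n) = 1)
    (b : ℤ) (hb : (n : ℤ) * b ≡ 1 [ZMOD (m : ℤ)]) :
    carQuot (m * n) a ≡
      ((carmichael n / Nat.gcd (carmichael m) (carmichael n) : ℕ) : ℤ) * b *
        carQuot m a [ZMOD (m : ℤ)] := by
  set k := carmichael n / Nat.gcd (carmichael m) (carmichael n)
  have ham : Int.gcd a m = 1 := Nat.Coprime.coprime_mul_right_right ha
  have hlcm : carmichael (m * n) = carmichael m * k := by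
    rw [carmichael_mul_of_coprime hmn, Nat.lcm, Nat.mul_div_assoc _ (Nat.gcd_dvd_right _ _)]
  have key : (n : ℤ) * carQuot (m * n) a ≡ k * carQuot m a [ZMOD m] := by
    refine Int.modEq_mul_of_pow_sub_one_eq_mul (by omega) k (mul_carQuot m ham).symm ?_
    rw [← pow_mul, ← hlcm, ← mul_carQuot _ ha]
    push_cast
    ring
  calc carQuot (m * n) a = 1 * carQuot (m * n) a := (one_mul _).symm
    _ ≡ n * b * carQuot (m * n) a [ZMOD m] := hb.symm.mul_right _
    _ = b * (n * carQuot (m * n) a) := by ring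
    _ ≡ b * (k * carQuot m a) [ZMOD m] := key.mul_left b
    _ = k * b * carQuot m a := by ring

theorem stmt6 (m n : ℕ) (hm : 2 ≤ m) (hn : 2 ≤ n) (hmn : Nat.gcd m n = 1)
    (a : ℤ) (ha : Int.gcd a (m * n) = 1)
    (b : ℤ) (hb : (n : ℤ) * b ≡ 1 [ZMOD (m : ℤ)]) :
    carQuot (m * n) a ≡
      ((carmichael n / Nat.gcd (carmichael m) (carmichael n) : ℕ) : ℤ) * b *
        carQuot m a [ZMOD (m : ℤ)] :=
  stmt6_general m n hm hmn a ha b hb
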